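/- Let M be an 𝕆-bimodule and m a conjugate associative element of M. Then (am)b = (a·b̄)m for all octonions a, b. -/

import Mathlib

/-!
Conjugate associativity turns the identity `[p,q,m] = [m,p,q]` into `m[p,q] = -[p,q]m`.
Commutators span the imaginary octonions, so `mb = b̄m` for every `b`. The identity
`[b,a,m] = [a,m,b]` then reads `(am)b = a((b + b̄)m) - b(am) = b̄(am) = (ab̄)m`.
-/

noncomputable section

open Quaternion

/-- The octonions, via the Cayley–Dickson construction on the quaternions. -/
def Octonion : Type := ℍ[ℝ] × ℍ[ℝ]

namespace Octonion

instance : AddCommGroup Octonion := inferInstanceAs (AddCommGroup (ℍ[ℝ] × ℍ[ℝ]))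
instance : Module ℝ Octonion := inferInstanceAs (Module ℝ (ℍ[ℝ] × ℍ[ℝ]))

instance : One Octonion := ⟨((1 : ℍ[ℝ]), (0 : ℍ[ℝ]))⟩
instance : Mul Octonion :=
  ⟨fun x y => (x.1 * y.1 - star y.2 * x.2, y.2 * x.1 + x.2 * star y.1)⟩
/-- Octonionic conjugation. -/
instance : Star Octonion := ⟨fun x => (star x.1, -x.2)⟩

/-- The associator `[a,b,c] = (ab)c - a(bc)`. -/
def assoc (a b c : Octonion) : Octonion := a * b * c - a * (b * c)

/-- The standard imaginary units `e 0 = e₁, …, e 6 = e₇`. -/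
def e : Fin 7 → Octonion
  | 0 => ((⟨0,1,0,0⟩ : ℍ[ℝ]), 0)
  | 1 => ((⟨0,0,1,0⟩ : ℍ[ℝ]), 0)
  | 2 => ((⟨0,0,0,1⟩ : ℍ[ℝ]), 0)
  | 3 => (0, (1 : ℍ[ℝ]))
  | 4 => (0, (⟨0,1,0,0⟩ : ℍ[ℝ]))
  | 5 => (0, (⟨0,0,1,0⟩ : ℍ[ℝ]))
  | 6 => (0, (⟨0,0,0,1⟩ : ℍ[ℝ]))

end Octonion

/-- A left `𝕆`-module: a real vector space with an `ℝ`-bilinear octonion action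
satisfying `1 • m = m` and the alternating rule. -/
structure LeftOModule (M : Type) [AddCommGroup M] [Module ℝ M] where
  smul : Octonion →ₗ[ℝ] M →ₗ[ℝ] M
  one_smul : ∀ m : M, smul 1 m = m
  alt : ∀ (p q : Octonion) (m : M),
    smul (p * q) m - smul p (smul q m) = -(smul (q * p) m - smul q (smul p m))

/-- An `𝕆`-bimodule: compatible left and right `𝕆`-module structures with
`[p,q,m] = [q,m,p] = [m,p,q]`.  Here `l p m` is `p * m` and `r p m` is `m * p`. -/
structure OBimodule (M : Type) [AddCommGroup M] [Module ℝ M] where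
  l : Octonion →ₗ[ℝ] M →ₗ[ℝ] M
  r : Octonion →ₗ[ℝ] M →ₗ[ℝ] M
  one_l : ∀ m : M, l 1 m = m
  one_r : ∀ m : M, r 1 m = m
  /-- left alternating rule `[p,q,m] = -[q,p,m]` -/
  alt_l : ∀ (p q : Octonion) (m : M),
    l (p * q) m - l p (l q m) = -(l (q * p) m - l q (l p m))
  /-- right alternating rule `[m,p,q] = -[m,q,p]` -/
  alt_r : ∀ (p q : Octonion) (m : M),
    r q (r p m) - r (p * q) m = -(r p (r q m) - r (q * p) m)
  /-- `[p,q,m] = [q,m,p]` -/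
  comp_lm : ∀ (p q : Octonion) (m : M),
    l (p * q) m - l p (l q m) = r p (l q m) - l q (r p m)
  /-- `[p,q,m] = [m,p,q]` -/
  comp_rm : ∀ (p q : Octonion) (m : M),
    l (p * q) m - l p (l q m) = r q (r p m) - r (p * q) m

namespace Octonion

@[simp] lemma fst_add (x y : Octonion) : (x + y).1 = x.1 + y.1 := rfl
@[simp] lemma snd_add (x y : Octonion) : (x + y).2 = x.2 + y.2 := rfl
@[simp] lemma fst_sub (x y : Octonion) : (x - y).1 = x.1 - y.1 := rfl
@[simp] lemma snd_sub (x y : Octonion) : (x - y).2 = x.2 - y.2 := rfl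
@[simp] lemma fst_smul (t : ℝ) (x : Octonion) : (t • x).1 = t • x.1 := rfl
@[simp] lemma snd_smul (t : ℝ) (x : Octonion) : (t • x).2 = t • x.2 := rfl
@[simp] lemma fst_one : (1 : Octonion).1 = 1 := rfl
@[simp] lemma snd_one : (1 : Octonion).2 = 0 := rfl
@[simp] lemma fst_mul (x y : Octonion) : (x * y).1 = x.1 * y.1 - star y.2 * x.2 := rfl
@[simp] lemma snd_mul (x y : Octonion) : (x * y).2 = y.2 * x.1 + x.2 * star y.1 := rfl
@[simp] lemma fst_star (x : Octonion) : (star x).1 = star x.1 := rfl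
@[simp] lemma snd_star (x : Octonion) : (star x).2 = -x.2 := rfl

@[ext] lemma ext {x y : Octonion} (h₁ : x.1 = y.1) (h₂ : x.2 = y.2) : x = y := Prod.ext h₁ h₂

lemma add_star (b : Octonion) : b + star b = (2 * b.1.re) • 1 := by
  ext <;> simp [two_mul]

lemma sub_re_eq_commutators (b : Octonion) :
    b - b.1.re • 1 =
      (b.1.imI / 2) • (e 1 * e 2 - e 2 * e 1) + (b.1.imJ / 2) • (e 2 * e 0 - e 0 * e 2) +
      (b.1.imK / 2) • (e 0 * e 1 - e 1 * e 0) + (b.2.re / 2) • (e 4 * e 0 - e 0 * e 4) +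
      (b.2.imI / 2) • (e 0 * e 3 - e 3 * e 0) + (b.2.imJ / 2) • (e 1 * e 3 - e 3 * e 1) +
      (b.2.imK / 2) • (e 2 * e 3 - e 3 * e 2) := by
  ext <;> simp [Quaternion.re_mul, Quaternion.imI_mul, Quaternion.imJ_mul, Quaternion.imK_mul] <;>
    simp [e] <;> ring

lemma sub_re_mem_span_commutators (b : Octonion) :
    b - b.1.re • 1 ∈ Submodule.span ℝ {c | ∃ p q : Octonion, p * q - q * p = c} := by
  rw [sub_re_eq_commutators]
  repeat' refine Submodule.add_mem _ ?_ ?_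
  all_goals exact Submodule.smul_mem _ _ (Submodule.subset_span ⟨_, _, rfl⟩)

end Octonion

namespace OBimodule

variable {M : Type} [AddCommGroup M] [Module ℝ M] (B : OBimodule M)

def IsConjAssoc (m : M) : Prop :=
  (∀ p q : Octonion, B.l (p * q) m = B.l q (B.l p m)) ∧
    ∀ p q : Octonion, B.r q (B.r p m) = B.r (q * p) m

variable {B}

lemma l_add_l_star (b : Octonion) (x : M) : B.l b x + B.l (star b) x = (2 * b.1.re) • x := by
  rw [← LinearMap.add_apply, ← map_add, Octonion.add_star, map_smul, LinearMap.smul_apply, B.one_l]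

lemma IsConjAssoc.r_commutator {m : M} (hm : B.IsConjAssoc m) (p q : Octonion) :
    B.r (p * q - q * p) m = -B.l (p * q - q * p) m := by
  have h := B.comp_rm p q m
  rw [hm.2, ← hm.1 q p] at h
  simp only [map_sub, LinearMap.sub_apply, h]
  abel

lemma IsConjAssoc.r_eq_neg_l_of_mem_span {m : M} (hm : B.IsConjAssoc m) {c : Octonion}
    (hc : c ∈ Submodule.span ℝ {c | ∃ p q : Octonion, p * q - q * p = c}) :
    B.r c m = -B.l c m := by
  suffices c ∈ LinearMap.ker (B.r.flip m + B.l.flip m) by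
    simpa [eq_neg_iff_add_eq_zero] using this
  refine Submodule.span_le.mpr ?_ hc
  rintro _ ⟨p, q, rfl⟩
  simp only [SetLike.mem_coe, LinearMap.mem_ker, LinearMap.add_apply, LinearMap.flip_apply,
    hm.r_commutator, neg_add_cancel]

lemma IsConjAssoc.r_eq_l_star {m : M} (hm : B.IsConjAssoc m) (b : Octonion) :
    B.r b m = B.l (star b) m := by
  have him := hm.r_eq_neg_l_of_mem_span (Octonion.sub_re_mem_span_commutators b)
  simp only [map_sub, map_smul, LinearMap.sub_apply, LinearMap.smul_apply, B.one_l, B.one_r] at him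
  linear_combination (norm := module) him - l_add_l_star b m

lemma IsConjAssoc.r_l_eq_l_mul_star {m : M} (hm : B.IsConjAssoc m) (a b : Octonion) :
    B.r b (B.l a m) = B.l (a * star b) m := by
  have h := B.comp_lm b a m
  rw [hm.1, hm.r_eq_l_star] at h
  calc B.r b (B.l a m) = B.l a (B.l b m + B.l (star b) m) - B.l b (B.l a m) := by
        rw [map_add]
        linear_combination (norm := abel) -h
    _ = B.l (star b) (B.l a m) := by
        rw [l_add_l_star, map_smul]
        linear_combination (norm := module) -l_add_l_star b (B.l a m)
    _ = B.l (a * star b) m := (hm.1 a (star b)).symm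

end OBimodule

/-- For a conjugate associative element `m` of an `𝕆`-bimodule,
`(am)b = (a·b̄)m` for all octonions `a`, `b`. -/
theorem bimodule_conjAssoc_amb {M : Type} [AddCommGroup M] [Module ℝ M]
    (B : OBimodule M) (m : M)
    (h1 : ∀ p q : Octonion, B.l (p * q) m = B.l q (B.l p m))
    (h2 : ∀ p q : Octonion, B.r q (B.r p m) = B.r (q * p) m) :
    ∀ a b : Octonion, B.r b (B.l a m) = B.l (a * star b) m :=
  OBimodule.IsConjAssoc.r_l_eq_l_mul_star ⟨h1, h2⟩
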